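/- arXiv:1208.0131 — 2 statements merged into one kernel-verified Lean document; each statement's English description precedes it below -/
import Mathlib

section
/- The measure μ on ℝ² with density dμ = (1+xy)^{-2} dx dy restricted to Ω = [0,1) × [0,1] is invariant under the natural extension map 𝒯(x,y) = (T(x), 1/(d(x)+y)), where T is the Gauss map and d(x) = ⌊1/x⌋. -/
/-!
On the cylinder `{d = n} × [0,1)` the natural extension is inverted by
`ψₙ(u, v) = (1/(u+n), 1/v - n)`, which maps `[0,1) × {d = n}` bijectively onto it. The Jacobian
of `ψₙ` is `((u+n) v)⁻²` and `1 + ψₙ(u,v).1 * ψₙ(u,v).2 = (1 + uv) / ((u+n) v)`, so `ψₙ` carries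
the measure with density `(1+xy)⁻²` on `[0,1) × {d = n}` to the one on `{d = n} × [0,1)`.
Both families of rectangles partition `Ω` up to a null set, so summing over `n` gives invariance.
-/

open MeasureTheory Set Function
open scoped ENNReal

noncomputable section

-- For `x ≠ 0` this is `1/x - ⌊1/x⌋`; Lean's `0⁻¹ = 0` makes `gaussMap 0 = 0`.
def gaussMap (x : ℝ) : ℝ := Int.fract x⁻¹

def gaussNatExt (p : ℝ × ℝ) : ℝ × ℝ := (gaussMap p.1, (⌊p.1⁻¹⌋ + p.2)⁻¹)

def gaussDensity (p : ℝ × ℝ) : ℝ≥0∞ := ENNReal.ofReal ((1 + p.1 * p.2) ^ 2)⁻¹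

-- The inverse branch `u ↦ 1/(u+n)` of the Gauss map onto the cylinder `{d = n}`.
def gaussBranch (n : ℕ) : ℝ ≃ ℝ where
  toFun u := (u + n)⁻¹
  invFun x := x⁻¹ - n
  left_inv u := by simp
  right_inv x := by simp

-- The inverse of the natural extension on `{d = n} × [0,1)`.
def natExtBranch (n : ℕ) : ℝ × ℝ ≃ ℝ × ℝ := (gaussBranch n).prodCongr (gaussBranch n).symm

def natExtBranchDeriv (n : ℕ) (p : ℝ × ℝ) : ℝ × ℝ →L[ℝ] ℝ × ℝ :=
  (ContinuousLinearMap.toSpanSingleton ℝ (-((p.1 + n) ^ 2)⁻¹)).prodMap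
    (ContinuousLinearMap.toSpanSingleton ℝ (-(p.2 ^ 2)⁻¹))

def digitCylinder (n : ℕ) : Set ℝ := {x | 0 < x ∧ ⌊x⁻¹⌋₊ = n}

end

theorem ContinuousLinearMap.det_prodMap {R M M' : Type*} [CommRing R] [TopologicalSpace M]
    [AddCommGroup M] [Module R M] [Module.Free R M] [Module.Finite R M] [TopologicalSpace M']
    [AddCommGroup M'] [Module R M'] [Module.Free R M'] [Module.Finite R M']
    (f : M →L[R] M) (g : M' →L[R] M') : (f.prodMap g).det = f.det * g.det := by
  rw [ContinuousLinearMap.det, ContinuousLinearMap.coe_prodMap, LinearMap.det_prodMap]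

theorem map_restrict_withDensity_of_hasFDerivWithinAt {E : Type*} [NormedAddCommGroup E]
    [NormedSpace ℝ E] [FiniteDimensional ℝ E] [MeasurableSpace E] [BorelSpace E]
    (μ : Measure E) [μ.IsAddHaarMeasure] {f : E → E} {f' : E → E →L[ℝ] E} {s : Set E}
    {g : E → ℝ≥0∞} (hs : MeasurableSet s) (hf : Measurable f)
    (hf' : ∀ x ∈ s, HasFDerivWithinAt f (f' x) s x) (hinj : InjOn f s)
    (hg : ∀ x ∈ s, ENNReal.ofReal |(f' x).det| * g (f x) = g x) :
    ((μ.restrict s).withDensity g).map f = (μ.restrict (f '' s)).withDensity g := by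
  ext t ht
  have hpre : MeasurableSet (f ⁻¹' t ∩ s) := (hf ht).inter hs
  rw [Measure.map_apply hf ht, withDensity_apply _ (hf ht), withDensity_apply _ ht,
    Measure.restrict_restrict (hf ht), Measure.restrict_restrict ht, ← image_preimage_inter,
    lintegral_image_eq_lintegral_abs_det_fderiv_mul μ hpre
      (fun x hx => (hf' x hx.2).mono inter_subset_right) (hinj.mono inter_subset_right)]
  exact setLIntegral_congr_fun hpre fun x hx => (hg x hx.2).symm

theorem image_gaussBranch_Ico {n : ℕ} (hn : n ≠ 0) :
    gaussBranch n '' Ico 0 1 = digitCylinder n := by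
  ext x
  rw [Equiv.image_eq_preimage_symm]
  simp only [mem_preimage, mem_Ico, digitCylinder, mem_ofPred_eq, gaussBranch, Equiv.coe_fn_symm_mk,
    sub_nonneg, sub_lt_iff_lt_add']
  constructor
  · rintro ⟨hle, hlt⟩
    have hx : 0 < x⁻¹ := lt_of_lt_of_le (by exact_mod_cast Nat.pos_of_ne_zero hn) hle
    exact ⟨inv_pos.mp hx, Nat.floor_eq_iff hx.le |>.mpr ⟨hle, hlt⟩⟩
  · rintro ⟨hx, hfloor⟩
    exact (Nat.floor_eq_iff (inv_pos.mpr hx).le).mp hfloor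

theorem measurableSet_digitCylinder (n : ℕ) : MeasurableSet (digitCylinder n) :=
  (measurableSet_lt measurable_const measurable_id).inter
    (measurableSet_eq_fun (Nat.measurable_floor.comp measurable_inv) measurable_const)

theorem iUnion_digitCylinder : ⋃ n : ℕ+, digitCylinder n = Ioc 0 1 := by
  ext x
  simp only [mem_iUnion, digitCylinder, mem_ofPred_eq, mem_Ioc]
  constructor
  · rintro ⟨n, hx, hfloor⟩
    refine ⟨hx, one_le_inv₀ hx |>.mp ?_⟩
    exact Nat.one_le_floor_iff _ |>.mp (hfloor ▸ n.pos)
  · rintro ⟨hx, hle⟩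
    refine ⟨⟨⌊x⁻¹⌋₊, Nat.floor_pos.mpr ((one_le_inv₀ hx).mpr hle)⟩, hx, rfl⟩

theorem pairwise_disjoint_digitCylinder : Pairwise (Disjoint on fun n : ℕ+ => digitCylinder n) :=
  fun _ _ hmn => disjoint_left.mpr fun _ hm hn => hmn (PNat.coe_injective (hm.2.symm.trans hn.2))

theorem restrict_Ico_prod_Icc_eq_sum_left :
    volume.restrict (Ico (0 : ℝ) 1 ×ˢ Icc (0 : ℝ) 1) =
      Measure.sum fun n : ℕ+ => volume.restrict (digitCylinder n ×ˢ Ico (0 : ℝ) 1) := by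
  have hae : Ico (0 : ℝ) 1 ×ˢ Icc (0 : ℝ) 1
      =ᵐ[volume] ⋃ n : ℕ+, digitCylinder n ×ˢ Ico (0 : ℝ) 1 := by
    rw [← iUnion_prod_const, iUnion_digitCylinder, Measure.volume_eq_prod]
    exact Measure.set_prod_ae_eq (Ico_ae_eq_Icc.trans Ioc_ae_eq_Icc.symm) Ico_ae_eq_Icc.symm
  rw [Measure.restrict_congr_set hae, Measure.restrict_iUnion]
  · exact fun _ _ hmn => (pairwise_disjoint_digitCylinder hmn).set_prod_left _ _
  · exact fun n => (measurableSet_digitCylinder n).prod measurableSet_Ico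

theorem restrict_Ico_prod_Icc_eq_sum_right :
    volume.restrict (Ico (0 : ℝ) 1 ×ˢ Icc (0 : ℝ) 1) =
      Measure.sum fun n : ℕ+ => volume.restrict (Ico (0 : ℝ) 1 ×ˢ digitCylinder n) := by
  have hae : Ico (0 : ℝ) 1 ×ˢ Icc (0 : ℝ) 1
      =ᵐ[volume] ⋃ n : ℕ+, Ico (0 : ℝ) 1 ×ˢ digitCylinder n := by
    rw [← prod_iUnion, iUnion_digitCylinder, Measure.volume_eq_prod]
    exact Measure.set_prod_ae_eq (ae_eq_refl _) Ioc_ae_eq_Icc.symm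
  rw [Measure.restrict_congr_set hae, Measure.restrict_iUnion]
  · exact fun _ _ hmn => (pairwise_disjoint_digitCylinder hmn).set_prod_right _ _
  · exact fun n => measurableSet_Ico.prod (measurableSet_digitCylinder n)

theorem hasFDerivAt_natExtBranch (n : ℕ) {p : ℝ × ℝ} (hp₁ : p.1 + n ≠ 0) (hp₂ : p.2 ≠ 0) :
    HasFDerivAt (natExtBranch n) (natExtBranchDeriv n p) p := by
  have h₁ : HasDerivAt (gaussBranch n) (-((p.1 + n) ^ 2)⁻¹) p.1 :=
    (((hasDerivAt_id p.1).add_const (n : ℝ)).inv hp₁).congr_deriv (by simp [neg_div])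
  have h₂ : HasDerivAt (gaussBranch n).symm (-(p.2 ^ 2)⁻¹) p.2 :=
    (hasDerivAt_inv hp₂).sub_const (n : ℝ)
  exact h₁.hasFDerivAt.prodMap p h₂.hasFDerivAt

theorem det_natExtBranchDeriv (n : ℕ) (p : ℝ × ℝ) :
    (natExtBranchDeriv n p).det = ((p.1 + n) ^ 2)⁻¹ * (p.2 ^ 2)⁻¹ := by
  simp [natExtBranchDeriv, ContinuousLinearMap.det_prodMap]

theorem gaussDensity_natExtBranch {n : ℕ} {p : ℝ × ℝ} (hp₁ : p.1 + n ≠ 0) (hp₂ : p.2 ≠ 0) :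
    ENNReal.ofReal |(natExtBranchDeriv n p).det| * gaussDensity (natExtBranch n p) =
      gaussDensity p := by
  obtain ⟨u, v⟩ := p
  simp only at hp₁ hp₂
  have key : 1 + (u + n)⁻¹ * (v⁻¹ - n) = (1 + u * v) / ((u + n) * v) := by
    field_simp
    ring
  rw [det_natExtBranchDeriv, abs_of_nonneg (by positivity), gaussDensity, gaussDensity,
    ← ENNReal.ofReal_mul (by positivity)]
  simp only [natExtBranch, Equiv.prodCongr_apply, Prod.map, gaussBranch, Equiv.coe_fn_mk,
    Equiv.coe_fn_symm_mk, key]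
  congr 1
  field_simp

theorem measurable_natExtBranch (n : ℕ) : Measurable (natExtBranch n) :=
  (measurable_id.add_const _).inv.prodMap (measurable_inv.sub_const _)

theorem measurable_gaussNatExt : Measurable gaussNatExt := by
  unfold gaussNatExt gaussMap
  fun_prop

theorem image_natExtBranch (n : ℕ+) :
    natExtBranch n '' (Ico 0 1 ×ˢ digitCylinder n) = digitCylinder n ×ˢ Ico 0 1 := by
  rw [natExtBranch, Equiv.prodCongr_apply, prodMap_image_prod, image_gaussBranch_Ico n.ne_zero,
    ← image_gaussBranch_Ico n.ne_zero, Equiv.symm_image_image]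

theorem map_natExtBranch_withDensity (n : ℕ+) :
    ((volume.restrict (Ico 0 1 ×ˢ digitCylinder n)).withDensity gaussDensity).map
        (natExtBranch n) =
      (volume.restrict (digitCylinder n ×ˢ Ico 0 1)).withDensity gaussDensity := by
  have hp₁ {p : ℝ × ℝ} (hp : p ∈ Ico 0 1 ×ˢ digitCylinder n) : p.1 + n ≠ 0 := by
    have := hp.1.1
    positivity
  have hp₂ {p : ℝ × ℝ} (hp : p ∈ Ico 0 1 ×ˢ digitCylinder n) : p.2 ≠ 0 := hp.2.1.ne'
  rw [← image_natExtBranch]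
  exact map_restrict_withDensity_of_hasFDerivWithinAt volume
    (measurableSet_Ico.prod (measurableSet_digitCylinder n)) (measurable_natExtBranch n)
    (fun p hp => (hasFDerivAt_natExtBranch n (hp₁ hp) (hp₂ hp)).hasFDerivWithinAt)
    (natExtBranch n).injective.injOn
    (fun p hp => gaussDensity_natExtBranch (hp₁ hp) (hp₂ hp))

theorem gaussNatExt_natExtBranch (n : ℕ) {p : ℝ × ℝ} (hp : p.1 ∈ Ico 0 1) :
    gaussNatExt (natExtBranch n p) = p := by
  have hfloor : ⌊p.1 + n⌋ = n := by
    rw [Int.floor_add_natCast, Int.floor_eq_zero_iff.mpr hp, zero_add]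
  simp [gaussNatExt, gaussMap, natExtBranch, gaussBranch, hfloor, Int.fract_eq_self.mpr hp]

theorem map_gaussNatExt_cylinder (n : ℕ+) :
    ((volume.restrict (digitCylinder n ×ˢ Ico 0 1)).withDensity gaussDensity).map gaussNatExt =
      (volume.restrict (Ico 0 1 ×ˢ digitCylinder n)).withDensity gaussDensity := by
  have hinv : gaussNatExt ∘ natExtBranch n
      =ᵐ[(volume.restrict (Ico 0 1 ×ˢ digitCylinder n)).withDensity gaussDensity] id :=
    (withDensity_absolutelyContinuous _ _).ae_le <|
      ae_restrict_of_forall_mem (measurableSet_Ico.prod (measurableSet_digitCylinder n))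
        fun p hp => gaussNatExt_natExtBranch n hp.1
  rw [← map_natExtBranch_withDensity, Measure.map_map measurable_gaussNatExt
    (measurable_natExtBranch n), Measure.map_congr hinv, Measure.map_id]

theorem map_gaussNatExt_withDensity :
    ((volume.restrict (Ico 0 1 ×ˢ Icc 0 1)).withDensity gaussDensity).map gaussNatExt =
      (volume.restrict (Ico 0 1 ×ˢ Icc 0 1)).withDensity gaussDensity :=
  calc ((volume.restrict (Ico 0 1 ×ˢ Icc 0 1)).withDensity gaussDensity).map gaussNatExt
      = (Measure.sum fun n : ℕ+ =>
          (volume.restrict (digitCylinder n ×ˢ Ico 0 1)).withDensity gaussDensity).map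
            gaussNatExt := by
        rw [restrict_Ico_prod_Icc_eq_sum_left, withDensity_sum]
    _ = Measure.sum fun n : ℕ+ =>
          (volume.restrict (Ico 0 1 ×ˢ digitCylinder n)).withDensity gaussDensity := by
        simp_rw [Measure.map_sum measurable_gaussNatExt.aemeasurable, map_gaussNatExt_cylinder]
    _ = (volume.restrict (Ico 0 1 ×ˢ Icc 0 1)).withDensity gaussDensity := by
        rw [restrict_Ico_prod_Icc_eq_sum_right, withDensity_sum]

/-- The measure with density `(1+xy)^{-2}` with respect to Lebesgue
measure restricted to `Ω = [0,1) × [0,1]` is invariant under the natural extension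
map `𝒯(x,y) = (T(x), 1/(⌊1/x⌋ + y))` of the Gauss map `T`. -/
theorem natural_extension_measure_invariant
    (T : ℝ → ℝ) (hT : ∀ y : ℝ, T y = if y = 0 then 0 else 1 / y - ⌊(1 : ℝ) / y⌋)
    (𝒯 : ℝ × ℝ → ℝ × ℝ)
    (h𝒯 : ∀ p : ℝ × ℝ, 𝒯 p = (T p.1, 1 / ((⌊(1 : ℝ) / p.1⌋ : ℝ) + p.2)))
    (Ω : Set (ℝ × ℝ)) (hΩ : Ω = Set.Ico (0 : ℝ) 1 ×ˢ Set.Icc (0 : ℝ) 1)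
    (μ : Measure (ℝ × ℝ))
    (hμ : μ = (volume.restrict Ω).withDensity
        (fun p => ENNReal.ofReal (((1 + p.1 * p.2) ^ 2)⁻¹))) :
    μ.map 𝒯 = μ := by
  obtain rfl : T = gaussMap := funext fun y => by
    rw [hT, gaussMap]
    split_ifs with hy
    · simp [hy]
    · rw [Int.fract, one_div]
  obtain rfl : 𝒯 = gaussNatExt := funext fun p => by simp [h𝒯, gaussNatExt]
  subst hΩ hμ
  exact map_gaussNatExt_withDensity
end

section
/- Let Γ act on X, H ≤ Γ of finite index, p ∈ X with stabilizer Γ_p. For an H-orbit κ ⊆ Γ·p and any γ₀ with γ₀·p ∈ κ, the number of right cosets Hγ in H\Γ with γ·p ∈ κ equals the index of the stabilizer H_{γ₀·p} in γ₀ Γ_p γ₀⁻¹. -/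
/-- Let `Γ` act on `X`, `H ≤ Γ` of finite index, `p ∈ X`, and let
`κ` be the `H`-orbit of `γ₀·p`.  Then the number of right cosets `Hγ` with
`γ·p ∈ κ` equals the index of the stabilizer `H_{γ₀·p} = H ⊓ Stab_Γ(γ₀·p)` in the
conjugate `γ₀ Γ_p γ₀⁻¹` of the stabilizer `Γ_p` (the cusp width `w(κ)`). -/
theorem coset_class_size_eq_cusp_width
    {Γ : Type*} [Group Γ] {X : Type*} [MulAction Γ X]
    (H : Subgroup Γ) (hfin : H.FiniteIndex) (p : X) (γ₀ : Γ) :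
    Nat.card {c : Quotient (QuotientGroup.rightRel H) //
        ∃ γ : Γ, Quotient.mk (QuotientGroup.rightRel H) γ = c ∧
          γ • p ∈ MulAction.orbit H (γ₀ • p)} =
      (H ⊓ MulAction.stabilizer Γ (γ₀ • p)).relIndex
        (Subgroup.map (MulAut.conj γ₀).toMonoidHom (MulAction.stabilizer Γ p)) := by
  rw [← MulAction.stabilizer_smul_eq_stabilizer_map_conj]
  set S := MulAction.stabilizer Γ (γ₀ • p) with hS
  set K := (H ⊓ S).subgroupOf S with hK
  rw [Subgroup.relIndex, Subgroup.index_eq_card]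
  -- membership proof helper
  have hmem : ∀ s : S, ((s : Γ)⁻¹ * γ₀) • p ∈ MulAction.orbit H (γ₀ • p) := by
    intro s
    have : ((s : Γ)⁻¹ * γ₀) • p = γ₀ • p := by
      rw [mul_smul]
      have hs : (s : Γ) • (γ₀ • p) = γ₀ • p := s.2
      calc (s : Γ)⁻¹ • γ₀ • p = (s : Γ)⁻¹ • (s : Γ) • (γ₀ • p) := by rw [hs]
        _ = γ₀ • p := inv_smul_smul _ _
    rw [this]
    exact MulAction.mem_orbit_self _
  let f : S ⧸ K → {c : Quotient (QuotientGroup.rightRel H) //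
        ∃ γ : Γ, Quotient.mk (QuotientGroup.rightRel H) γ = c ∧
          γ • p ∈ MulAction.orbit H (γ₀ • p)} :=
    fun q => Quotient.liftOn' q
      (fun s => ⟨Quotient.mk (QuotientGroup.rightRel H) ((s : Γ)⁻¹ * γ₀),
        (s : Γ)⁻¹ * γ₀, rfl, hmem s⟩)
      (by
        intro s s' hrel
        have h1 : (s : Γ)⁻¹ * (s' : Γ) ∈ H := by
          have := (QuotientGroup.leftRel_apply).mp hrel
          rw [hK, Subgroup.mem_subgroupOf] at this
          exact this.1
        refine Subtype.ext (Quotient.sound' ?_)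
        rw [QuotientGroup.rightRel_apply]
        have : ((s' : Γ)⁻¹ * γ₀) * ((s : Γ)⁻¹ * γ₀)⁻¹ = (s' : Γ)⁻¹ * (s : Γ) := by
          group
        rw [this]
        simpa [mul_inv_rev] using H.inv_mem h1)
  have hbij : Function.Bijective f := by
    constructor
    · intro q q'
      induction q using Quotient.inductionOn'
      induction q' using Quotient.inductionOn'
      rename_i s s'
      intro hfeq
      have heq : Quotient.mk (QuotientGroup.rightRel H) ((s : Γ)⁻¹ * γ₀) =
          Quotient.mk (QuotientGroup.rightRel H) ((s' : Γ)⁻¹ * γ₀) :=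
        congrArg Subtype.val hfeq
      have h1 : (s' : Γ)⁻¹ * (s : Γ) ∈ H := by
        have := (QuotientGroup.rightRel_apply).mp (Quotient.exact' heq)
        have e : ((s' : Γ)⁻¹ * γ₀) * ((s : Γ)⁻¹ * γ₀)⁻¹ = (s' : Γ)⁻¹ * (s : Γ) := by group
        rwa [e] at this
      refine Quotient.sound' ?_
      rw [QuotientGroup.leftRel_apply, hK, Subgroup.mem_subgroupOf]
      refine ⟨by simpa [mul_inv_rev] using H.inv_mem h1, ?_⟩
      exact Subgroup.mul_mem _ (Subgroup.inv_mem _ s.2) s'.2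
    · rintro ⟨c, γ, hc, ⟨h, hγ⟩⟩
      -- hγ : (h : Γ) • (γ₀ • p) = γ • p
      have hγ' : ((h : Γ)⁻¹ * γ) • p = γ₀ • p := by
        rw [mul_smul, ← hγ]
        simp [Subgroup.smul_def]
      have hsS : γ₀ * γ⁻¹ * (h : Γ) ∈ S := by
        rw [hS, MulAction.mem_stabilizer_iff]
        calc (γ₀ * γ⁻¹ * (h : Γ)) • (γ₀ • p)
            = (γ₀ * γ⁻¹ * (h : Γ)) • (((h : Γ)⁻¹ * γ) • p) := by rw [hγ']
          _ = ((γ₀ * γ⁻¹ * (h : Γ)) * ((h : Γ)⁻¹ * γ)) • p := by simp only [mul_smul]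
          _ = γ₀ • p := by group
      refine ⟨Quotient.mk'' (⟨γ₀ * γ⁻¹ * (h : Γ), hsS⟩ : S), ?_⟩
      refine Subtype.ext ?_
      show Quotient.mk (QuotientGroup.rightRel H) ((γ₀ * γ⁻¹ * (h : Γ))⁻¹ * γ₀) = c
      rw [← hc]
      refine Quotient.sound' ?_
      rw [QuotientGroup.rightRel_apply]
      have e : γ * ((γ₀ * γ⁻¹ * (h : Γ))⁻¹ * γ₀)⁻¹ = (h : Γ) := by group
      rw [e]
      exact h.2
  rw [Nat.card_congr (Equiv.ofBijective f hbij)]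
end
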